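/- arXiv:math-ph/0302029 — 2 statements merged into one kernel-verified Lean document; each statement's English description precedes it below -/
import Mathlib

section
/- If ‖(T(a;a)T(b;a))‖ ≤ C₀ and d is the number of occurrences of the factor T(b;a) in a product of transfer matrices at energy E = a for a potential satisfying (S1)-(S2), then the norm of the product of the first n transfer matrices is at most C₀^d. -/
open scoped Matrix.Norms.L2Operator

/-- One-step transfer matrix of the discrete Schrödinger equation. -/
def Tstep (x E : ℝ) : Matrix (Fin 2) (Fin 2) ℝ := !![E - x, -1; 1, 0]

/-- The product `T(V(n);E) ⋯ T(V(1);E)` of the first `n` one-step transfer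
matrices of the potential `V`. -/
def transferProd (V : ℕ → ℝ) (E : ℝ) (n : ℕ) : Matrix (Fin 2) (Fin 2) ℝ :=
  ((List.range n).map (fun i => Tstep (V (n - i)) E)).prod

open Matrix in
lemma transferProd_succ (V : ℕ → ℝ) (E : ℝ) (n : ℕ) :
    transferProd V E (n + 1) = Tstep (V (n + 1)) E * transferProd V E n := by
  have : ((fun i => Tstep (V (n + 1 - i)) E) ∘ Nat.succ) = fun i => Tstep (V (n - i)) E := by
    funext i; simp [Nat.succ_sub_succ]
  simp [transferProd, List.range_succ_eq_map, List.map_map, this]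

lemma J_mul_J (a : ℝ) : Tstep a a * Tstep a a = -1 := by
  ext i j
  fin_cases i <;> fin_cases j <;>
    simp [Tstep, Matrix.mul_apply, Fin.sum_univ_two]

open Matrix in
lemma norm_J (a : ℝ) : ‖Tstep a a‖ = 1 := by
  have h1 : (Tstep a a)ᴴ * Tstep a a = 1 := by
    ext i j
    fin_cases i <;> fin_cases j <;>
      simp [Tstep, Matrix.mul_apply, Matrix.conjTranspose_apply, Matrix.transpose_apply,
        Fin.sum_univ_two, Matrix.vecHead, Matrix.vecTail]
  have h2 := Matrix.l2_opNorm_conjTranspose_mul_self (Tstep a a)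
  rw [h1] at h2
  have hone : ‖(1 : Matrix (Fin 2) (Fin 2) ℝ)‖ = 1 := norm_one
  nlinarith [norm_nonneg (Tstep a a)]

theorem stmt6 (a b : ℝ) (V : ℕ → ℝ) (hval : ∀ n, V n = a ∨ V n = b)
    -- (S1): occurrences of `b` are isolated
    (hS1 : ∀ n : ℕ, 1 ≤ n → V n = b → V (n - 1) = a ∧ V (n + 1) = a)
    -- (S2): the value `a` always occurs with odd multiplicity between `b`'s
    (hS2 : ∀ n k : ℕ, V n = b → V (n + k + 1) = b →
      (∀ j, 1 ≤ j → j ≤ k → V (n + j) = a) → Odd k)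
    (C₀ : ℝ) (hC₀ : ‖Tstep a a * Tstep b a‖ ≤ C₀) :
    ∀ n : ℕ, ‖transferProd V a n‖ ≤
      C₀ ^ ((Finset.Icc 1 n).filter (fun k => V k = b)).card := by
  have hC₀0 : 0 ≤ C₀ := le_trans (norm_nonneg _) hC₀
  have hB : ‖Tstep b a‖ ≤ C₀ := by
    have key : Tstep b a = (-(Tstep a a)) * (Tstep a a * Tstep b a) := by
      rw [← mul_assoc, neg_mul, J_mul_J]; simp
    calc ‖Tstep b a‖ = ‖(-(Tstep a a)) * (Tstep a a * Tstep b a)‖ := by rw [← key]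
      _ ≤ ‖-(Tstep a a)‖ * ‖Tstep a a * Tstep b a‖ := Matrix.l2_opNorm_mul _ _
      _ = 1 * ‖Tstep a a * Tstep b a‖ := by rw [norm_neg, norm_J]
      _ ≤ C₀ := by rw [one_mul]; exact hC₀
  intro n
  induction n with
  | zero => simp [transferProd]
  | succ n ih =>
    rw [transferProd_succ]
    have hicc : Finset.Icc 1 (n + 1) = insert (n + 1) (Finset.Icc 1 n) :=
      (Finset.insert_Icc_right_eq_Icc_add_one (Nat.succ_le_succ (Nat.zero_le n))).symm
    by_cases hb : V (n + 1) = b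
    · have hcard : ((Finset.Icc 1 (n + 1)).filter (fun k => V k = b)).card =
          ((Finset.Icc 1 n).filter (fun k => V k = b)).card + 1 := by
        rw [hicc, Finset.filter_insert, if_pos hb, Finset.card_insert_of_notMem]
        simp
      rw [hcard, pow_succ, mul_comm (C₀ ^ _) C₀]
      calc ‖Tstep (V (n + 1)) a * transferProd V a n‖
          ≤ ‖Tstep (V (n + 1)) a‖ * ‖transferProd V a n‖ := Matrix.l2_opNorm_mul _ _
        _ ≤ C₀ * C₀ ^ ((Finset.Icc 1 n).filter (fun k => V k = b)).card := by
            apply mul_le_mul _ ih (norm_nonneg _) hC₀0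
            rw [hb]; exact hB
    · have ha : V (n + 1) = a := (hval (n + 1)).resolve_right hb
      have hcard : ((Finset.Icc 1 (n + 1)).filter (fun k => V k = b)).card =
          ((Finset.Icc 1 n).filter (fun k => V k = b)).card := by
        rw [hicc, Finset.filter_insert, if_neg hb]
      rw [hcard]
      calc ‖Tstep (V (n + 1)) a * transferProd V a n‖
          ≤ ‖Tstep (V (n + 1)) a‖ * ‖transferProd V a n‖ := Matrix.l2_opNorm_mul _ _
        _ = ‖transferProd V a n‖ := by rw [ha, norm_J, one_mul]
        _ ≤ C₀ ^ ((Finset.Icc 1 n).filter (fun k => V k = b)).card := ih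
end

section
/- Let μ be a finite positive Borel measure on ℝ and F(z) = ∫ dμ(x)/(x - z) its Borel transform. For any Borel set S ⊂ ℝ, ε > 0, and S_ε the ε-neighborhood of S, one has ∫_{S_ε} Im F(E + iε) dE ≥ (π/2)·μ(S). -/
open MeasureTheory Real

lemma ker_eq {ε : ℝ} (hε : 0 < ε) (x E : ℝ) :
    ε / ((x - E) ^ 2 + ε ^ 2) = ε⁻¹ * (1 + ((E - x) / ε) ^ 2)⁻¹ := by
  rw [div_pow]
  rw [inv_eq_one_div, inv_eq_one_div]
  field_simp
  ring

lemma ker_integrable {ε : ℝ} (hε : 0 < ε) (x : ℝ) :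
    Integrable (fun E => ε / ((x - E) ^ 2 + ε ^ 2)) := by
  simp_rw [ker_eq hε x]
  exact ((integrable_inv_one_add_sq.comp_div hε.ne').comp_sub_right x).const_mul _

lemma ker_nonneg {ε : ℝ} (hε : 0 < ε) (x E : ℝ) : 0 ≤ ε / ((x - E) ^ 2 + ε ^ 2) := by
  positivity

lemma ker_deriv {ε : ℝ} (hε : 0 < ε) (x E : ℝ) :
    HasDerivAt (fun E => arctan ((E - x) / ε)) (ε / ((x - E) ^ 2 + ε ^ 2)) E := by
  have h1 : HasDerivAt (fun E : ℝ => (E - x) / ε) (1 / ε) E := by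
    simpa using ((hasDerivAt_id E).sub_const x).div_const ε
  have h2 := (Real.hasDerivAt_arctan ((E - x) / ε)).comp E h1
  refine h2.congr_deriv ?_
  rw [div_pow]
  field_simp
  ring

lemma ker_interval {ε : ℝ} (hε : 0 < ε) (x : ℝ) :
    ∫ E in (x - ε)..(x + ε), ε / ((x - E) ^ 2 + ε ^ 2) = π / 2 := by
  rw [intervalIntegral.integral_eq_sub_of_hasDerivAt
    (fun E _ => ker_deriv hε x E) ((ker_integrable hε x).intervalIntegrable)]
  simp only [add_sub_cancel_left, sub_sub_cancel_left]
  rw [div_self hε.ne', neg_div, div_self hε.ne']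
  rw [Real.arctan_one, Real.arctan_neg, Real.arctan_one]
  ring

lemma ker_lintegral_full {ε : ℝ} (hε : 0 < ε) (x : ℝ) :
    ∫⁻ E, ENNReal.ofReal (ε / ((x - E) ^ 2 + ε ^ 2)) = ENNReal.ofReal π := by
  rw [← ofReal_integral_eq_lintegral_ofReal (ker_integrable hε x)
    (Filter.Eventually.of_forall (ker_nonneg hε x))]
  congr 1
  simp_rw [ker_eq hε x]
  rw [MeasureTheory.integral_const_mul]
  have h1 : (∫ E, (1 + ((E - x) / ε) ^ 2)⁻¹) = ∫ u, (1 + (u / ε) ^ 2)⁻¹ :=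
    integral_sub_right_eq_self (fun u => (1 + (u / ε) ^ 2)⁻¹) x
  rw [h1, MeasureTheory.Measure.integral_comp_div (fun u => (1 + u ^ 2)⁻¹) ε,
    integral_univ_inv_one_add_sq, abs_of_pos hε, smul_eq_mul]
  field_simp

lemma ker_lintegral_Ioc {ε : ℝ} (hε : 0 < ε) (x : ℝ) :
    ∫⁻ E in Set.Ioc (x - ε) (x + ε), ENNReal.ofReal (ε / ((x - E) ^ 2 + ε ^ 2))
      = ENNReal.ofReal (π / 2) := by
  rw [← ofReal_integral_eq_lintegral_ofReal ((ker_integrable hε x).integrableOn)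
    (Filter.Eventually.of_forall (ker_nonneg hε x))]
  congr 1
  rw [← intervalIntegral.integral_of_le (by linarith)]
  exact ker_interval hε x
open MeasureTheory Real

theorem stmt9 (μ : Measure ℝ) [IsFiniteMeasure μ] (S : Set ℝ)
    (hS : MeasurableSet S) (ε : ℝ) (hε : 0 < ε) :
    (Real.pi / 2) * (μ S).toReal ≤
      ∫ E in {E : ℝ | ∃ E' ∈ S, |E - E'| ≤ ε},
        (∫ x, ε / ((x - E) ^ 2 + ε ^ 2) ∂μ) := by
  set T := {E : ℝ | ∃ E' ∈ S, |E - E'| ≤ ε} with hTdef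
  have hcont : Continuous (fun p : ℝ × ℝ => ε / ((p.2 - p.1) ^ 2 + ε ^ 2)) := by
    apply continuous_const.div (by fun_prop)
    intro p; positivity
  -- integrability in x for fixed E
  have h_int_μ : ∀ E : ℝ, Integrable (fun x => ε / ((x - E) ^ 2 + ε ^ 2)) μ := by
    intro E
    refine Integrable.mono' (integrable_const ε⁻¹)
      (hcont.comp (Continuous.prodMk_right E)).aestronglyMeasurable ?_
    filter_upwards with x
    rw [Real.norm_eq_abs, abs_of_nonneg (ker_nonneg hε x E)]
    calc ε / ((x - E) ^ 2 + ε ^ 2) ≤ ε / ε ^ 2 := by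
          apply div_le_div_of_nonneg_left hε.le (by positivity) (by nlinarith [sq_nonneg (x - E)])
      _ = ε⁻¹ := by rw [sq]; field_simp
  -- rewrite outer integral as lintegral
  have h_h_meas : AEStronglyMeasurable
      (fun E => ∫ x, ε / ((x - E) ^ 2 + ε ^ 2) ∂μ) (volume.restrict T) :=
    hcont.stronglyMeasurable.integral_prod_right'.aestronglyMeasurable
  rw [integral_eq_lintegral_of_nonneg_ae
    (Filter.Eventually.of_forall fun E => integral_nonneg fun x => ker_nonneg hε x E) h_h_meas]
  have key : ∀ E : ℝ, ENNReal.ofReal (∫ x, ε / ((x - E) ^ 2 + ε ^ 2) ∂μ)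
      = ∫⁻ x, ENNReal.ofReal (ε / ((x - E) ^ 2 + ε ^ 2)) ∂μ := fun E =>
    ofReal_integral_eq_lintegral_ofReal (h_int_μ E)
      (Filter.Eventually.of_forall fun x => ker_nonneg hε x E)
  simp_rw [key]
  have hmeas_unc : AEMeasurable
      (Function.uncurry fun E x => ENNReal.ofReal (ε / ((x - E) ^ 2 + ε ^ 2)))
      ((volume.restrict T).prod μ) :=
    (hcont.measurable.ennreal_ofReal).aemeasurable
  have hswap : (∫⁻ E in T, ∫⁻ x, ENNReal.ofReal (ε / ((x - E) ^ 2 + ε ^ 2)) ∂μ)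
      = ∫⁻ x, (∫⁻ E in T, ENNReal.ofReal (ε / ((x - E) ^ 2 + ε ^ 2))) ∂μ :=
    lintegral_lintegral_swap hmeas_unc
  have hupper : (∫⁻ E in T, ∫⁻ x, ENNReal.ofReal (ε / ((x - E) ^ 2 + ε ^ 2)) ∂μ)
      ≤ ENNReal.ofReal π * μ Set.univ := by
    rw [hswap]
    calc ∫⁻ x, (∫⁻ E in T, ENNReal.ofReal (ε / ((x - E) ^ 2 + ε ^ 2))) ∂μ
        ≤ ∫⁻ x, (∫⁻ E, ENNReal.ofReal (ε / ((x - E) ^ 2 + ε ^ 2))) ∂μ :=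
          lintegral_mono fun x => setLIntegral_le_lintegral _ _
      _ = ∫⁻ _, ENNReal.ofReal π ∂μ := lintegral_congr fun x => ker_lintegral_full hε x
      _ = ENNReal.ofReal π * μ Set.univ := by rw [lintegral_const]
  have hlower : ENNReal.ofReal (π / 2) * μ S
      ≤ ∫⁻ E in T, ∫⁻ x, ENNReal.ofReal (ε / ((x - E) ^ 2 + ε ^ 2)) ∂μ := by
    rw [hswap]
    calc ENNReal.ofReal (π / 2) * μ S
        = ∫⁻ _ in S, ENNReal.ofReal (π / 2) ∂μ := by rw [setLIntegral_const]
      _ ≤ ∫⁻ x in S, (∫⁻ E in T, ENNReal.ofReal (ε / ((x - E) ^ 2 + ε ^ 2))) ∂μ := by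
          refine setLIntegral_mono' hS fun x hx => ?_
          rw [← ker_lintegral_Ioc hε x]
          refine lintegral_mono_set fun E hE => ?_
          refine ⟨x, hx, ?_⟩
          rw [abs_le]
          constructor <;> [linarith [hE.1]; linarith [hE.2]]
      _ ≤ ∫⁻ x, (∫⁻ E in T, ENNReal.ofReal (ε / ((x - E) ^ 2 + ε ^ 2))) ∂μ :=
          setLIntegral_le_lintegral _ _
  have hfin : (∫⁻ E in T, ∫⁻ x, ENNReal.ofReal (ε / ((x - E) ^ 2 + ε ^ 2)) ∂μ) ≠ ⊤ :=
    (lt_of_le_of_lt hupper (ENNReal.mul_lt_top ENNReal.ofReal_lt_top (measure_lt_top μ _))).ne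
  have := ENNReal.toReal_mono hfin hlower
  rwa [ENNReal.toReal_mul, ENNReal.toReal_ofReal (by positivity)] at this
end
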